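/- arXiv:2405.09688 — 2 statements merged into one kernel-verified Lean document; each statement's English description precedes it below -/
import Mathlib

section
/- Let g : ℝ → ℝ be continuously differentiable on ℝ \ {0}, with g(w) = g(|w|), g(0)=0, g increasing to ∞. Suppose λ* > 0 minimizes R(λ) = Σ_{w∈IN} g(λw) + Σ_{w∈OUT} g(w/λ) over λ ∈ (0,∞), with all weights nonzero. Then (λ*)² Σ_{w∈IN} w·g'(λ*w) = Σ_{w∈OUT} w·g'(w/λ*), and consequently the rescaled weights v (v = λ*w for w ∈ IN, v = w/λ* for w ∈ OUT) satisfy Σ_{v∈IN} v·g'(v) = Σ_{v∈OUT} v·g'(v). -/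
/-!
At an interior minimum of `R(t) = ∑ g (t * u i) + ∑ g (v j / t)` the derivative
`R'(t) = ∑ u i * g'(t * u i) - (∑ v j * g'(v j / t)) / t ^ 2` vanishes; multiplying by `t ^ 2`
gives the first identity and dividing it by `t` the second.
-/

open Finset

section

variable {I J : Type*} [Fintype I] [Fintype J]

noncomputable def rescaledCost (g : ℝ → ℝ) (u : I → ℝ) (v : J → ℝ) (t : ℝ) : ℝ :=
  ∑ i, g (t * u i) + ∑ j, g (v j / t)

theorem hasDerivAt_comp_mul_const {g : ℝ → ℝ} {a t : ℝ} (hg : DifferentiableAt ℝ g (t * a)) :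
    HasDerivAt (fun s => g (s * a)) (a * deriv g (t * a)) t := by
  have hmul : HasDerivAt (fun s => s * a) a t := by
    simpa using (hasDerivAt_id t).mul_const a
  exact (hg.hasDerivAt.comp t hmul).congr_deriv (mul_comm _ _)

theorem hasDerivAt_comp_const_div {g : ℝ → ℝ} {a t : ℝ} (ht : t ≠ 0)
    (hg : DifferentiableAt ℝ g (a / t)) :
    HasDerivAt (fun s => g (a / s)) (-(a * deriv g (a / t)) / t ^ 2) t := by
  have hdiv : HasDerivAt (fun s => a / s) (-a / t ^ 2) t := by
    simpa [div_eq_mul_inv, neg_div] using (hasDerivAt_inv ht).const_mul a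
  exact (hg.hasDerivAt.comp t hdiv).congr_deriv (by ring)

theorem hasDerivAt_rescaledCost {g : ℝ → ℝ} (hg : ∀ x, x ≠ 0 → DifferentiableAt ℝ g x)
    {u : I → ℝ} {v : J → ℝ} (hu : ∀ i, u i ≠ 0) (hv : ∀ j, v j ≠ 0) {t : ℝ} (ht : t ≠ 0) :
    HasDerivAt (rescaledCost g u v)
      (∑ i, u i * deriv g (t * u i) - (∑ j, v j * deriv g (v j / t)) / t ^ 2) t := by
  have hin : HasDerivAt (fun s => ∑ i, g (s * u i)) (∑ i, u i * deriv g (t * u i)) t :=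
    HasDerivAt.fun_sum fun i _ => hasDerivAt_comp_mul_const (hg _ (mul_ne_zero ht (hu i)))
  have hout : HasDerivAt (fun s => ∑ j, g (v j / s))
      (∑ j, -(v j * deriv g (v j / t)) / t ^ 2) t :=
    HasDerivAt.fun_sum fun j _ => hasDerivAt_comp_const_div ht (hg _ (div_ne_zero (hv j) ht))
  refine (hin.add hout).congr_deriv ?_
  rw [← sum_div, sum_neg_distrib, neg_div, sub_eq_add_neg]

theorem sq_mul_sum_eq_sum_of_isMinOn {g : ℝ → ℝ} (hg : ∀ x, x ≠ 0 → DifferentiableAt ℝ g x)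
    {u : I → ℝ} {v : J → ℝ} (hu : ∀ i, u i ≠ 0) (hv : ∀ j, v j ≠ 0) {l : ℝ} (hl : 0 < l)
    (hmin : IsMinOn (rescaledCost g u v) (Set.Ioi 0) l) :
    l ^ 2 * ∑ i, u i * deriv g (l * u i) = ∑ j, v j * deriv g (v j / l) := by
  have hzero := (hmin.isLocalMin (Ioi_mem_nhds hl)).hasDerivAt_eq_zero
    (hasDerivAt_rescaledCost hg hu hv hl.ne')
  rw [sub_eq_zero, eq_div_iff (by positivity)] at hzero
  linear_combination hzero

end

theorem balance_optimality_conditions_general {I J : Type*} [Fintype I] [Fintype J]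
    (g : ℝ → ℝ)
    (hdiff : ∀ x : ℝ, x ≠ 0 → DifferentiableAt ℝ g x)
    (u : I → ℝ) (v : J → ℝ) (hu : ∀ i, u i ≠ 0) (hv : ∀ j, v j ≠ 0)
    (l : ℝ) (hl : 0 < l)
    (hmin : IsMinOn (fun t : ℝ => ∑ i, g (t * u i) + ∑ j, g (v j / t)) (Set.Ioi 0) l) :
    l ^ 2 * ∑ i, u i * deriv g (l * u i) = ∑ j, v j * deriv g (v j / l) ∧
    ∑ i, (l * u i) * deriv g (l * u i) = ∑ j, (v j / l) * deriv g (v j / l) := by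
  have hbalance := sq_mul_sum_eq_sum_of_isMinOn hdiff hu hv hl hmin
  refine ⟨hbalance, ?_⟩
  simp only [mul_assoc, div_mul_eq_mul_div, ← mul_sum, ← sum_div]
  rw [eq_div_iff hl.ne', ← hbalance]
  ring

theorem balance_optimality_conditions {I J : Type*} [Fintype I] [Fintype J]
    (g : ℝ → ℝ)
    (hdiff : ∀ x : ℝ, x ≠ 0 → DifferentiableAt ℝ g x)
    (hderiv_cont : ContinuousOn (deriv g) {x : ℝ | x ≠ 0})
    (habs : ∀ w : ℝ, g w = g |w|) (h0 : g 0 = 0)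
    (hmono : StrictMonoOn g (Set.Ici 0))
    (htop : Filter.Tendsto g Filter.atTop Filter.atTop)
    (u : I → ℝ) (v : J → ℝ) (hu : ∀ i, u i ≠ 0) (hv : ∀ j, v j ≠ 0)
    (l : ℝ) (hl : 0 < l)
    (hmin : IsMinOn (fun t : ℝ => ∑ i, g (t * u i) + ∑ j, g (v j / t)) (Set.Ioi 0) l) :
    l ^ 2 * ∑ i, u i * deriv g (l * u i) = ∑ j, v j * deriv g (v j / l) ∧
    ∑ i, (l * u i) * deriv g (l * u i) = ∑ j, (v j / l) * deriv g (v j / l) :=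
  balance_optimality_conditions_general g hdiff u v hu hv l hl hmin
end

section
/- Let f : [0,1] → ℝ be continuous and ε > 0. Then there exist N ∈ ℕ, slopes λ_1,...,λ_N ∈ ℝ, output weights β_0, β_1, ..., β_N ∈ ℝ such that for all x ∈ [0,1], |f(x) − (β_0 + Σ_{k=1}^N β_k·g_{λ_k}(x − (k−1)/N))| < ε, where g_λ(x) = 0 for x < 0 and g_λ(x) = λx for x ≥ 0. -/
/-!
By uniform continuity, `f` varies by less than `ε` on intervals of length `1 / N` for `N` large.
The piecewise linear interpolant of `f` at the nodes `k / N` is a sum of hinges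
`β_k * max (x - k / N) 0` plus a constant, where `β_k` is the change of slope at `k / N`.
On each cell `[j / N, (j + 1) / N]` it is a convex combination of `f (j / N)` and
`f ((j + 1) / N)`, both within `ε` of `f x`, so it is itself within `ε` of `f x`.
-/

/-- ReLU-type activation with slope `l`: `g_l(x) = 0` for `x < 0`, `l * x` for `x ≥ 0`. -/
noncomputable def reluSlope (l x : ℝ) : ℝ := if x < 0 then 0 else l * x

open Finset

def interpSlope (y : ℕ → ℝ) (N : ℝ) (k : ℕ) : ℝ := N * (y (k + 1) - y k)

/-- Change of slope of the interpolant at the node `k / N`; to the left of `0` the slope is `0`. -/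
def hingeWeight (y : ℕ → ℝ) (N : ℝ) (k : ℕ) : ℝ :=
  interpSlope y N k - if k = 0 then 0 else interpSlope y N (k - 1)

/-- The piecewise linear interpolant of `y` at the nodes `k / N`, as a unit-slope network. -/
noncomputable def interpNet (y : ℕ → ℝ) (N : ℕ) (x : ℝ) : ℝ :=
  y 0 + ∑ k : Fin N, hingeWeight y N k * reluSlope 1 (x - (k : ℕ) / N)

theorem reluSlope_one (x : ℝ) : reluSlope 1 x = max x 0 := by
  unfold reluSlope
  split_ifs with h
  · exact (max_eq_right h.le).symm
  · rw [one_mul, max_eq_left (not_lt.1 h)]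

theorem sum_hingeWeight_mul (y : ℕ → ℝ) {N : ℝ} (hN : N ≠ 0) (x : ℝ) (j : ℕ) :
    ∑ k ∈ range (j + 1), hingeWeight y N k * (x - k / N) =
      y j - y 0 + interpSlope y N j * (x - j / N) := by
  induction j with
  | zero => simp [hingeWeight]
  | succ j ih =>
    rw [sum_range_succ, ih]
    simp only [hingeWeight, interpSlope, Nat.add_one_ne_zero, if_false, Nat.add_sub_cancel]
    push_cast
    field_simp
    ring

theorem sum_mul_reluSlope_one_eq_sum_range {N j : ℕ} (hj : j < N) {x : ℝ}
    (hjx : (j : ℝ) / N ≤ x) (hxj : x ≤ (j + 1 : ℝ) / N) (c : ℕ → ℝ) :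
    ∑ k : Fin N, c k * reluSlope 1 (x - (k : ℕ) / N) = ∑ k ∈ range (j + 1), c k * (x - k / N) := by
  have htail : ∑ k ∈ Ico (j + 1) N, c k * reluSlope 1 (x - k / N) = 0 := by
    refine sum_eq_zero fun k hk => ?_
    have : (j + 1 : ℝ) / N ≤ k / N := by gcongr; exact_mod_cast (mem_Ico.1 hk).1
    rw [reluSlope_one, max_eq_right (by linarith), mul_zero]
  rw [Fin.sum_univ_eq_sum_range (fun k => c k * reluSlope 1 (x - k / N)),
    ← sum_range_add_sum_Ico _ hj, htail, add_zero]
  refine sum_congr rfl fun k hk => ?_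
  have : (k : ℝ) / N ≤ j / N := by gcongr; exact_mod_cast Nat.lt_succ_iff.1 (mem_range.1 hk)
  rw [reluSlope_one, max_eq_left (by linarith)]

theorem exists_nat_div_le_and_le_succ_div {N : ℕ} (hN : 0 < N) {x : ℝ}
    (hx : x ∈ Set.Icc (0 : ℝ) 1) :
    ∃ j < N, (j : ℝ) / N ≤ x ∧ x ≤ (j + 1 : ℝ) / N := by
  have hNR : (0 : ℝ) < N := by exact_mod_cast hN
  have hNx : 0 ≤ (N : ℝ) * x := mul_nonneg hNR.le hx.1
  refine ⟨min ⌊(N : ℝ) * x⌋₊ (N - 1), by omega, ?_, ?_⟩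
  · rw [div_le_iff₀ hNR]
    linarith [(Nat.cast_le (α := ℝ)).2 (min_le_left ⌊(N : ℝ) * x⌋₊ (N - 1)), Nat.floor_le hNx]
  · rw [le_div_iff₀ hNR]
    rcases min_choice ⌊(N : ℝ) * x⌋₊ (N - 1) with h | h <;> rw [h]
    · linarith [Nat.lt_floor_add_one ((N : ℝ) * x)]
    · rw [Nat.cast_sub hN, Nat.cast_one, sub_add_cancel]
      nlinarith [hx.2]

theorem interpNet_eq_convex_combo {y : ℕ → ℝ} {N j : ℕ} (hj : j < N) {x : ℝ}
    (hjx : (j : ℝ) / N ≤ x) (hxj : x ≤ (j + 1 : ℝ) / N) :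
    interpNet y N x = (1 - (N * x - j)) * y j + (N * x - j) * y (j + 1) := by
  have hN : (N : ℝ) ≠ 0 := Nat.cast_ne_zero.2 (by omega)
  rw [interpNet, sum_mul_reluSlope_one_eq_sum_range hj hjx hxj, sum_hingeWeight_mul y hN,
    interpSlope]
  field_simp
  ring

theorem abs_sub_convex_combo_lt {z a b ε t : ℝ} (ha : |z - a| < ε) (hb : |z - b| < ε)
    (ht₀ : 0 ≤ t) (ht₁ : t ≤ 1) : |z - ((1 - t) * a + t * b)| < ε := by
  have := (convex_ball z ε)
    (show a ∈ Metric.ball z ε by rwa [Metric.mem_ball, Real.dist_eq, abs_sub_comm])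
    (show b ∈ Metric.ball z ε by rwa [Metric.mem_ball, Real.dist_eq, abs_sub_comm])
    (sub_nonneg.2 ht₁) ht₀ (sub_add_cancel 1 t)
  rwa [Metric.mem_ball, Real.dist_eq, abs_sub_comm, smul_eq_mul, smul_eq_mul] at this

theorem bilu_universal_approximation (f : ℝ → ℝ)
    (hf : ContinuousOn f (Set.Icc 0 1)) (ε : ℝ) (hε : 0 < ε) :
    ∃ (N : ℕ), 0 < N ∧ ∃ (lam β : Fin N → ℝ) (β₀ : ℝ),
      ∀ x ∈ Set.Icc (0 : ℝ) 1,
        |f x - (β₀ + ∑ k : Fin N, β k * reluSlope (lam k) (x - (k : ℕ) / N))| < ε := by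
  obtain ⟨δ, hδ, hfδ⟩ := Metric.uniformContinuousOn_iff.1
    (isCompact_Icc.uniformContinuousOn_of_continuous hf) ε hε
  obtain ⟨N, hδN⟩ := exists_nat_gt (1 / δ)
  have hNR : (0 : ℝ) < N := (one_div_pos.2 hδ).trans hδN
  have hN : 0 < N := by exact_mod_cast hNR
  have hmesh : 1 / (N : ℝ) < δ := by rwa [one_div_lt hNR hδ]
  set y : ℕ → ℝ := fun k => f (k / N)
  refine ⟨N, hN, fun _ => 1, fun k => hingeWeight y N k, y 0, fun x hx => ?_⟩
  obtain ⟨j, hj, hjx, hxj⟩ := exists_nat_div_le_and_le_succ_div hN hx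
  have hnode : ∀ i ≤ N, |x - i / N| ≤ 1 / N → |f x - y i| < ε := fun i hi hxi =>
    hfδ x hx _ ⟨by positivity, div_le_one_of_le₀ (by exact_mod_cast hi) hNR.le⟩
      (by rw [Real.dist_eq]; linarith)
  have hstep : (j + 1 : ℝ) / N = j / N + 1 / N := add_div _ _ _
  have ht₀ : 0 ≤ N * x - j := by rw [div_le_iff₀ hNR] at hjx; linarith
  have ht₁ : N * x - j ≤ 1 := by rw [le_div_iff₀ hNR] at hxj; linarith
  change |f x - interpNet y N x| < ε
  rw [interpNet_eq_convex_combo hj hjx hxj]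
  refine abs_sub_convex_combo_lt (hnode j hj.le ?_) (hnode (j + 1) hj ?_) ht₀ ht₁
  · rw [abs_le]; constructor <;> linarith
  · push_cast; rw [abs_le]; constructor <;> linarith
end
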